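/- arXiv:1401.2625 — 4 statements merged into one kernel-verified Lean document; each statement's English description precedes it below -/
import Mathlib

section
/- Let V, U, Z be real Banach spaces and δ₀ ∈ U. Let u : U → V be Fréchet differentiable at δ₀, let E : V × U → Z be Fréchet differentiable at (u(δ₀), δ₀) and satisfy E(u(δ), δ) = 0 for all δ ∈ U, and let J : V × U → ℝ be Fréchet differentiable at (u(δ₀), δ₀). Suppose ζ ∈ Z* (a continuous linear functional on Z) solves the adjoint equation: for every v ∈ V, (∂J/∂u)(u(δ₀),δ₀)[v] + ζ((∂E/∂u)(u(δ₀),δ₀)[v]) = 0. Then the reduced functional J̃(δ) = J(u(δ), δ) is Fréchet differentiable at δ₀ and, for every q ∈ U, J̃′(δ₀)[q] = (∂J/∂δ)(u(δ₀),δ₀)[q] + ζ((∂E/∂δ)(u(δ₀),δ₀)[q]). -/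
/-! Differentiating the constraint `E (u δ, δ) = 0` along the graph `δ ↦ (u δ, δ)` gives
`E' (u' q, q) = 0`. Hence `ζ (E' (u' q, q))` may be added to the chain-rule value
`J' (u' q, q)` of the reduced derivative for free; splitting `(u' q, q) = (u' q, 0) + (0, q)`,
the adjoint equation kills the `(u' q, 0)` part, which removes the unknown sensitivity `u'`. -/

theorem HasFDerivAt.comp_eq_zero_of_eventuallyEq_const
    {𝕜 E F G : Type*} [NontriviallyNormedField 𝕜]
    [NormedAddCommGroup E] [NormedSpace 𝕜 E] [NormedAddCommGroup F] [NormedSpace 𝕜 F]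
    [NormedAddCommGroup G] [NormedSpace 𝕜 G]
    {f : F → G} {g : E → F} {f' : F →L[𝕜] G} {g' : E →L[𝕜] F} {x : E} {c : G}
    (hf : HasFDerivAt f f' (g x)) (hg : HasFDerivAt g g' x)
    (hc : f ∘ g =ᶠ[nhds x] fun _ => c) :
    f'.comp g' = 0 :=
  (hf.comp x hg).unique ((hasFDerivAt_const c x).congr_of_eventuallyEq hc)

theorem adjoint_method_reduced_gradient_general
    {V U Z : Type*}
    [NormedAddCommGroup V] [NormedSpace ℝ V]
    [NormedAddCommGroup U] [NormedSpace ℝ U]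
    [NormedAddCommGroup Z] [NormedSpace ℝ Z]
    (δ₀ : U) (u : U → V) (E : V × U → Z) (J : V × U → ℝ)
    (u' : U →L[ℝ] V) (E' : V × U →L[ℝ] Z) (J' : V × U →L[ℝ] ℝ)
    (hu : HasFDerivAt u u' δ₀)
    (hE : HasFDerivAt E E' (u δ₀, δ₀))
    (hEconstr : ∀ δ : U, E (u δ, δ) = 0)
    (hJ : HasFDerivAt J J' (u δ₀, δ₀))
    (ζ : Z →L[ℝ] ℝ)
    (hadj : ∀ v : V, J' (v, 0) + ζ (E' (v, 0)) = 0) :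
    ∃ D : U →L[ℝ] ℝ, HasFDerivAt (fun δ : U => J (u δ, δ)) D δ₀ ∧
      ∀ q : U, D q = J' (0, q) + ζ (E' (0, q)) := by
  have hgraph : HasFDerivAt (fun δ => (u δ, δ)) (u'.prod (.id ℝ U)) δ₀ :=
    hu.prodMk (hasFDerivAt_id δ₀)
  have hsens : E'.comp (u'.prod (.id ℝ U)) = 0 :=
    hE.comp_eq_zero_of_eventuallyEq_const (g := fun δ => (u δ, δ)) hgraph
      (Filter.Eventually.of_forall hEconstr)
  refine ⟨J'.comp (u'.prod (.id ℝ U)), hJ.comp (f := fun δ => (u δ, δ)) δ₀ hgraph, fun q => ?_⟩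
  have hsens_q : E' (u' q, q) = 0 := by simpa using congr($hsens q)
  have hsplit : ((u' q, q) : V × U) = (u' q, 0) + (0, q) := by simp
  calc J'.comp (u'.prod (.id ℝ U)) q
      = J' (u' q, q) + ζ (E' (u' q, q)) := by simp [hsens_q]
    _ = (J' (u' q, 0) + ζ (E' (u' q, 0))) + (J' (0, q) + ζ (E' (0, q))) := by
        rw [hsplit, map_add, map_add, map_add]; ring
    _ = J' (0, q) + ζ (E' (0, q)) := by rw [hadj, zero_add]

/-- Adjoint-method formula for the derivative of the reduced functional
`J̃(δ) = J(u(δ), δ)`: if `ζ` solves the adjoint equation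
`(∂J/∂u)[v] + ζ((∂E/∂u)[v]) = 0` for all `v`, then `J̃` is Fréchet
differentiable at `δ₀` and `J̃′(δ₀)[q] = (∂J/∂δ)[q] + ζ((∂E/∂δ)[q])`. -/
theorem adjoint_method_reduced_gradient
    {V U Z : Type*}
    [NormedAddCommGroup V] [NormedSpace ℝ V] [CompleteSpace V]
    [NormedAddCommGroup U] [NormedSpace ℝ U] [CompleteSpace U]
    [NormedAddCommGroup Z] [NormedSpace ℝ Z] [CompleteSpace Z]
    (δ₀ : U) (u : U → V) (E : V × U → Z) (J : V × U → ℝ)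
    (u' : U →L[ℝ] V) (E' : V × U →L[ℝ] Z) (J' : V × U →L[ℝ] ℝ)
    (hu : HasFDerivAt u u' δ₀)
    (hE : HasFDerivAt E E' (u δ₀, δ₀))
    (hEconstr : ∀ δ : U, E (u δ, δ) = 0)
    (hJ : HasFDerivAt J J' (u δ₀, δ₀))
    (ζ : Z →L[ℝ] ℝ)
    (hadj : ∀ v : V, J' (v, 0) + ζ (E' (v, 0)) = 0) :
    ∃ D : U →L[ℝ] ℝ, HasFDerivAt (fun δ : U => J (u δ, δ)) D δ₀ ∧
      ∀ q : U, D q = J' (0, q) + ζ (E' (0, q)) :=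
  adjoint_method_reduced_gradient_general δ₀ u E J u' E' J' hu hE hEconstr hJ ζ hadj
end

section
/- Let V, U, Z be real Banach spaces and δ₀ ∈ U. Let u : U → V be Fréchet differentiable at δ₀, let E : V × U → Z be Fréchet differentiable at (u(δ₀), δ₀) with E(u(δ), δ) = 0 for all δ ∈ U, and let J : V × U → ℝ be Fréchet differentiable at (u(δ₀), δ₀). Assume further that T = (∂E/∂u)(u(δ₀),δ₀) : V → Z is a continuous linear isomorphism with continuous inverse T⁻¹. Then the reduced functional J̃(δ) = J(u(δ), δ) is Fréchet differentiable at δ₀ and, for every q ∈ U, J̃′(δ₀)[q] = (∂J/∂δ)(u(δ₀),δ₀)[q] − (∂J/∂u)(u(δ₀),δ₀)[ T⁻¹((∂E/∂δ)(u(δ₀),δ₀)[q]) ]. -/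
/-! Differentiating the state equation `E (u δ, δ) = 0` along the graph `δ ↦ (u δ, δ)` gives
`∂E/∂u [u' q] + ∂E/∂δ [q] = 0`, so the sensitivity is `u' q = -T⁻¹ (∂E/∂δ [q])`; substituting it
into the chain rule for `J (u δ, δ)` yields the formula. -/

open ContinuousLinearMap

section

variable {𝕜 : Type*} [NontriviallyNormedField 𝕜]
  {V U Z : Type*}
  [NormedAddCommGroup V] [NormedSpace 𝕜 V]
  [NormedAddCommGroup U] [NormedSpace 𝕜 U]
  [NormedAddCommGroup Z] [NormedSpace 𝕜 Z]

theorem ContinuousLinearMap.map_prod_eq_add (L : V × U →L[𝕜] Z) (v : V) (q : U) :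
    L (v, q) = L (v, 0) + L (0, q) := by
  rw [← map_add, Prod.mk_add_mk, add_zero, zero_add]

theorem HasFDerivAt.comp_graph {F : V × U → Z} {F' : V × U →L[𝕜] Z} {u : U → V}
    {u' : U →L[𝕜] V} {x : U} (hF : HasFDerivAt F F' (u x, x)) (hu : HasFDerivAt u u' x) :
    HasFDerivAt (fun y => F (u y, y)) (F'.comp (u'.prod (ContinuousLinearMap.id 𝕜 U))) x :=
  hF.comp (f := fun y => (u y, y)) x (hu.prodMk (hasFDerivAt_id x))

theorem HasFDerivAt.map_graph_eq_zero {E : V × U → Z} {E' : V × U →L[𝕜] Z} {u : U → V}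
    {u' : U →L[𝕜] V} {x : U} (hE : HasFDerivAt E E' (u x, x)) (hu : HasFDerivAt u u' x)
    (hEu : ∀ y, E (u y, y) = 0) (q : U) : E' (u' q, q) = 0 := by
  have hzero : HasFDerivAt (fun y => E (u y, y)) (0 : U →L[𝕜] Z) x := by
    simpa only [hEu] using hasFDerivAt_const (0 : Z) x
  simpa using congrArg (· q) ((hE.comp_graph hu).unique hzero)

theorem ContinuousLinearEquiv.eq_neg_symm_of_map_prod_eq_zero {E' : V × U →L[𝕜] Z}
    (T : V ≃L[𝕜] Z) (hT : ∀ v, T v = E' (v, 0)) {v : V} {q : U} (h : E' (v, q) = 0) :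
    v = -T.symm (E' (0, q)) := by
  rw [E'.map_prod_eq_add, ← hT] at h
  rw [← map_neg, ← eq_neg_of_add_eq_zero_left h, T.symm_apply_apply]

end

theorem reduced_gradient_via_inverse_general
    {V U Z : Type*}
    [NormedAddCommGroup V] [NormedSpace ℝ V]
    [NormedAddCommGroup U] [NormedSpace ℝ U]
    [NormedAddCommGroup Z] [NormedSpace ℝ Z]
    (δ₀ : U) (u : U → V) (E : V × U → Z) (J : V × U → ℝ)
    (u' : U →L[ℝ] V) (E' : V × U →L[ℝ] Z) (J' : V × U →L[ℝ] ℝ)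
    (hu : HasFDerivAt u u' δ₀)
    (hE : HasFDerivAt E E' (u δ₀, δ₀))
    (hEconstr : ∀ δ : U, E (u δ, δ) = 0)
    (hJ : HasFDerivAt J J' (u δ₀, δ₀))
    (T : V ≃L[ℝ] Z)
    (hT : ∀ v : V, T v = E' (v, 0)) :
    ∃ D : U →L[ℝ] ℝ, HasFDerivAt (fun δ : U => J (u δ, δ)) D δ₀ ∧
      ∀ q : U, D q = J' (0, q) - J' (T.symm (E' (0, q)), 0) := by
  refine ⟨J'.comp (u'.prod (ContinuousLinearMap.id ℝ U)), hJ.comp_graph hu, fun q => ?_⟩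
  have hsens : u' q = -T.symm (E' (0, q)) :=
    T.eq_neg_symm_of_map_prod_eq_zero hT (hE.map_graph_eq_zero hu hEconstr q)
  have hneg : ((-T.symm (E' (0, q)), 0) : V × U) = -(T.symm (E' (0, q)), 0) := by simp
  rw [comp_apply, prod_apply, ContinuousLinearMap.id_apply, J'.map_prod_eq_add, hsens, hneg,
    map_neg, neg_add_eq_sub]

/-- Sensitivity formula for the derivative of the reduced functional
`J̃(δ) = J(u(δ), δ)` when `T = (∂E/∂u)(u(δ₀),δ₀)` is a continuous linear
isomorphism: `J̃′(δ₀)[q] = (∂J/∂δ)[q] − (∂J/∂u)[T⁻¹((∂E/∂δ)[q])]`. -/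
theorem reduced_gradient_via_inverse
    {V U Z : Type*}
    [NormedAddCommGroup V] [NormedSpace ℝ V] [CompleteSpace V]
    [NormedAddCommGroup U] [NormedSpace ℝ U] [CompleteSpace U]
    [NormedAddCommGroup Z] [NormedSpace ℝ Z] [CompleteSpace Z]
    (δ₀ : U) (u : U → V) (E : V × U → Z) (J : V × U → ℝ)
    (u' : U →L[ℝ] V) (E' : V × U →L[ℝ] Z) (J' : V × U →L[ℝ] ℝ)
    (hu : HasFDerivAt u u' δ₀)
    (hE : HasFDerivAt E E' (u δ₀, δ₀))
    (hEconstr : ∀ δ : U, E (u δ, δ) = 0)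
    (hJ : HasFDerivAt J J' (u δ₀, δ₀))
    (T : V ≃L[ℝ] Z)
    (hT : ∀ v : V, T v = E' (v, 0)) :
    ∃ D : U →L[ℝ] ℝ, HasFDerivAt (fun δ : U => J (u δ, δ)) D δ₀ ∧
      ∀ q : U, D q = J' (0, q) - J' (T.symm (E' (0, q)), 0) :=
  reduced_gradient_via_inverse_general δ₀ u E J u' E' J' hu hE hEconstr hJ T hT
end

section
/- Let δ₁, ρ₂, D₂, δ₃, T ∈ ℝ with T > 0, let u = (u₁,u₂,u₃), η = (η₁,η₂,η₃), λ = (λ₁,λ₂,λ₃) : [0,1] × [0,T] → ℝ³ be continuously differentiable and let γ = (γ₁,γ₂,γ₃) : [0,1] → ℝ³ and u⁰ = (u₁⁰,u₂⁰,u₃⁰) : [0,1] → ℝ³ be continuous. Then the function f : ℝ → ℝ given by f(μ) = ⟨E(u + μη, δ₁), (λ,γ)⟩ is differentiable at 0 with f′(0) = ∫₀ᵀ∫₀¹ [ (∂η₁/∂t − η₁(1 − 2u₁) + δ₁η₁u₃ + δ₁u₁η₃)λ₁ + (∂η₂/∂t − ρ₂η₂(1 − 2u₂))λ₂ + (−D₂η₁(∂u₂/∂x)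 + D₂(1 − u₁)(∂η₂/∂x))(∂λ₂/∂x) + (∂η₃/∂t − δ₃(η₂ − η₃))λ₃ + (∂η₃/∂x)(∂λ₃/∂x) ] dx dt + ∫₀¹ η₁(x,0)γ₁(x) dx + ∫₀¹ η₂(x,0)γ₂(x) dx + ∫₀¹ η₃(x,0)γ₃(x) dx. -/
/-!
Partial derivatives of `u + μη` are those of `u` plus `μ` times those of `η`, so the integrand
of the constraint pairing is a polynomial of degree two in `μ` whose coefficients are continuous
on the rectangle. Integrating, the pairing is `A + μ B + μ² C`, where `B` is the integral of the
linearised integrand, and its derivative at `μ = 0` is `B`. The initial-value terms are affine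
in `μ` in the same way.
-/

open MeasureTheory Set

namespace intervalIntegral

variable {ν : Measure ℝ} {x₀ x₁ : ℝ}

theorem integral_add_mul_add_sq_mul {a b c : ℝ → ℝ} (ha : IntervalIntegrable a ν x₀ x₁)
    (hb : IntervalIntegrable b ν x₀ x₁) (hc : IntervalIntegrable c ν x₀ x₁) (ε : ℝ) :
    ∫ x in x₀..x₁, (a x + ε * b x + ε ^ 2 * c x) ∂ν
      = (∫ x in x₀..x₁, a x ∂ν) + ε * (∫ x in x₀..x₁, b x ∂ν) + ε ^ 2 * ∫ x in x₀..x₁, c x ∂ν := by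
  rw [integral_add (ha.add (hb.const_mul ε)) (hc.const_mul _), integral_add ha (hb.const_mul ε),
    integral_const_mul, integral_const_mul]

theorem hasDerivAt_integral_of_quadratic {a b c : ℝ → ℝ} (ha : IntervalIntegrable a ν x₀ x₁)
    (hb : IntervalIntegrable b ν x₀ x₁) (hc : IntervalIntegrable c ν x₀ x₁)
    {F : ℝ → ℝ → ℝ} (hF : ∀ ε x, F ε x = a x + ε * b x + ε ^ 2 * c x) :
    HasDerivAt (fun ε => ∫ x in x₀..x₁, F ε x ∂ν) (∫ x in x₀..x₁, b x ∂ν) 0 := by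
  simp only [hF, integral_add_mul_add_sq_mul ha hb hc]
  simpa using ((hasDerivAt_mul_const (∫ x in x₀..x₁, b x ∂ν)).const_add
    (∫ x in x₀..x₁, a x ∂ν)).fun_add ((hasDerivAt_pow 2 (0 : ℝ)).mul_const (∫ x in x₀..x₁, c x ∂ν))

end intervalIntegral

theorem continuous_intervalIntegral_fst {f : ℝ × ℝ → ℝ} (hf : Continuous f) (x₀ x₁ : ℝ) :
    Continuous fun t => ∫ x in x₀..x₁, f (x, t) :=
  intervalIntegral.continuous_parametric_intervalIntegral_of_continuous'
    (f := fun t x => f (x, t)) (by fun_prop) x₀ x₁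

theorem hasDerivAt_integral_integral_of_quadratic {a b c : ℝ × ℝ → ℝ} (ha : Continuous a)
    (hb : Continuous b) (hc : Continuous c) {F : ℝ → ℝ × ℝ → ℝ}
    (hF : ∀ ε p, F ε p = a p + ε * b p + ε ^ 2 * c p) (x₀ x₁ t₀ t₁ : ℝ) :
    HasDerivAt (fun ε => ∫ t in t₀..t₁, ∫ x in x₀..x₁, F ε (x, t))
      (∫ t in t₀..t₁, ∫ x in x₀..x₁, b (x, t)) 0 := by
  have hslice {f : ℝ × ℝ → ℝ} (hf : Continuous f) (t : ℝ) :
      IntervalIntegrable (fun x => f (x, t)) volume x₀ x₁ :=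
    (hf.comp (by fun_prop : Continuous fun x : ℝ => (x, t))).intervalIntegrable _ _
  refine intervalIntegral.hasDerivAt_integral_of_quadratic
    ((continuous_intervalIntegral_fst ha x₀ x₁).intervalIntegrable _ _)
    ((continuous_intervalIntegral_fst hb x₀ x₁).intervalIntegrable _ _)
    ((continuous_intervalIntegral_fst hc x₀ x₁).intervalIntegrable _ _) fun ε t => ?_
  simp only [hF]
  exact intervalIntegral.integral_add_mul_add_sq_mul (hslice ha t) (hslice hb t) (hslice hc t) ε

theorem hasDerivAt_integral_add_mul_sub_mul {v w v₀ g : ℝ → ℝ} {x₀ x₁ : ℝ}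
    (hv : ContinuousOn v (uIcc x₀ x₁)) (hw : ContinuousOn w (uIcc x₀ x₁))
    (hv₀ : ContinuousOn v₀ (uIcc x₀ x₁)) (hg : ContinuousOn g (uIcc x₀ x₁)) :
    HasDerivAt (fun ε => ∫ x in x₀..x₁, (v x + ε * w x - v₀ x) * g x)
      (∫ x in x₀..x₁, w x * g x) 0 :=
  intervalIntegral.hasDerivAt_integral_of_quadratic (a := fun x => (v x - v₀ x) * g x)
    (b := fun x => w x * g x) (c := 0)
    (((hv.sub hv₀).mul hg).intervalIntegrable) ((hw.mul hg).intervalIntegrable)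
    intervalIntegrable_const fun ε x => by rw [Pi.zero_apply]; ring

noncomputable def partialT (u : ℝ × ℝ → ℝ) (p : ℝ × ℝ) : ℝ := deriv (fun s => u (p.1, s)) p.2

noncomputable def partialX (u : ℝ × ℝ → ℝ) (p : ℝ × ℝ) : ℝ := deriv (fun y => u (y, p.2)) p.1

theorem hasDerivAt_slice_snd {u : ℝ × ℝ → ℝ} {p : ℝ × ℝ} (hu : DifferentiableAt ℝ u p) :
    HasDerivAt (fun s => u (p.1, s)) (fderiv ℝ u p (0, 1)) p.2 :=
  hu.hasFDerivAt.comp_hasDerivAt p.2 ((hasDerivAt_const _ _).prodMk (hasDerivAt_id _))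

theorem hasDerivAt_slice_fst {u : ℝ × ℝ → ℝ} {p : ℝ × ℝ} (hu : DifferentiableAt ℝ u p) :
    HasDerivAt (fun y => u (y, p.2)) (fderiv ℝ u p (1, 0)) p.1 :=
  hu.hasFDerivAt.comp_hasDerivAt p.1 ((hasDerivAt_id _).prodMk (hasDerivAt_const _ _))

theorem partialT_eq_fderiv {u : ℝ × ℝ → ℝ} {p : ℝ × ℝ} (hu : DifferentiableAt ℝ u p) :
    partialT u p = fderiv ℝ u p (0, 1) :=
  (hasDerivAt_slice_snd hu).deriv

theorem partialX_eq_fderiv {u : ℝ × ℝ → ℝ} {p : ℝ × ℝ} (hu : DifferentiableAt ℝ u p) :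
    partialX u p = fderiv ℝ u p (1, 0) :=
  (hasDerivAt_slice_fst hu).deriv

theorem partialT_add_mul {u η : ℝ × ℝ → ℝ} {p : ℝ × ℝ} (hu : DifferentiableAt ℝ u p)
    (hη : DifferentiableAt ℝ η p) (μ : ℝ) :
    partialT (fun q => u q + μ * η q) p = partialT u p + μ * partialT η p := by
  rw [partialT_eq_fderiv hu, partialT_eq_fderiv hη]
  exact ((hasDerivAt_slice_snd hu).add ((hasDerivAt_slice_snd hη).const_mul μ)).deriv

theorem partialX_add_mul {u η : ℝ × ℝ → ℝ} {p : ℝ × ℝ} (hu : DifferentiableAt ℝ u p)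
    (hη : DifferentiableAt ℝ η p) (μ : ℝ) :
    partialX (fun q => u q + μ * η q) p = partialX u p + μ * partialX η p := by
  rw [partialX_eq_fderiv hu, partialX_eq_fderiv hη]
  exact ((hasDerivAt_slice_fst hu).add ((hasDerivAt_slice_fst hη).const_mul μ)).deriv

@[fun_prop]
theorem ContDiff.continuous_partialT {u : ℝ × ℝ → ℝ} (hu : ContDiff ℝ 1 u) :
    Continuous (partialT u) :=
  ((hu.continuous_fderiv one_ne_zero).clm_apply continuous_const).congr fun p =>
    (partialT_eq_fderiv (hu.differentiable one_ne_zero p)).symm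

@[fun_prop]
theorem ContDiff.continuous_partialX {u : ℝ × ℝ → ℝ} (hu : ContDiff ℝ 1 u) :
    Continuous (partialX u) :=
  ((hu.continuous_fderiv one_ne_zero).clm_apply continuous_const).congr fun p =>
    (partialX_eq_fderiv (hu.differentiable one_ne_zero p)).symm

section GatenbyGawlinski

variable (δ₁ ρ₂ D₂ δ₃ : ℝ) (u₁ u₂ u₃ η₁ η₂ η₃ lam₁ lam₂ lam₃ : ℝ × ℝ → ℝ)

noncomputable def constraintDensity (p : ℝ × ℝ) : ℝ :=
  partialT u₁ p * lam₁ p - u₁ p * (1 - u₁ p) * lam₁ p + δ₁ * u₁ p * u₃ p * lam₁ p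
    + partialT u₂ p * lam₂ p - ρ₂ * u₂ p * (1 - u₂ p) * lam₂ p
    + D₂ * (1 - u₁ p) * partialX u₂ p * partialX lam₂ p
    + partialT u₃ p * lam₃ p + δ₃ * u₃ p * lam₃ p - δ₃ * u₂ p * lam₃ p
    + partialX u₃ p * partialX lam₃ p

noncomputable def constraintDensityLinear (p : ℝ × ℝ) : ℝ :=
  (partialT η₁ p - η₁ p * (1 - 2 * u₁ p) + δ₁ * η₁ p * u₃ p + δ₁ * u₁ p * η₃ p) * lam₁ p
    + (partialT η₂ p - ρ₂ * η₂ p * (1 - 2 * u₂ p)) * lam₂ p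
    + (- D₂ * η₁ p * partialX u₂ p + D₂ * (1 - u₁ p) * partialX η₂ p) * partialX lam₂ p
    + (partialT η₃ p - δ₃ * (η₂ p - η₃ p)) * lam₃ p
    + partialX η₃ p * partialX lam₃ p

noncomputable def constraintDensityQuadratic (p : ℝ × ℝ) : ℝ :=
  η₁ p * η₁ p * lam₁ p + δ₁ * η₁ p * η₃ p * lam₁ p + ρ₂ * η₂ p * η₂ p * lam₂ p
    - D₂ * η₁ p * partialX η₂ p * partialX lam₂ p

variable {u₁ u₂ u₃ η₁ η₂ η₃ lam₁ lam₂ lam₃}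

theorem constraintDensity_add_mul (hu₁ : Differentiable ℝ u₁) (hu₂ : Differentiable ℝ u₂)
    (hu₃ : Differentiable ℝ u₃) (hη₁ : Differentiable ℝ η₁) (hη₂ : Differentiable ℝ η₂)
    (hη₃ : Differentiable ℝ η₃) (μ : ℝ) (p : ℝ × ℝ) :
    constraintDensity δ₁ ρ₂ D₂ δ₃ (fun q => u₁ q + μ * η₁ q) (fun q => u₂ q + μ * η₂ q)
        (fun q => u₃ q + μ * η₃ q) lam₁ lam₂ lam₃ p
      = constraintDensity δ₁ ρ₂ D₂ δ₃ u₁ u₂ u₃ lam₁ lam₂ lam₃ p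
        + μ * constraintDensityLinear δ₁ ρ₂ D₂ δ₃ u₁ u₂ u₃ η₁ η₂ η₃ lam₁ lam₂ lam₃ p
        + μ ^ 2 * constraintDensityQuadratic δ₁ ρ₂ D₂ η₁ η₂ η₃ lam₁ lam₂ p := by
  simp only [constraintDensity, constraintDensityLinear, constraintDensityQuadratic,
    partialT_add_mul (hu₁ p) (hη₁ p), partialT_add_mul (hu₂ p) (hη₂ p),
    partialT_add_mul (hu₃ p) (hη₃ p), partialX_add_mul (hu₂ p) (hη₂ p),
    partialX_add_mul (hu₃ p) (hη₃ p)]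
  ring

end GatenbyGawlinski

theorem constraint_pairing_gateaux_derivative_in_state_general
    (δ₁ ρ₂ D₂ δ₃ T : ℝ) (u₁ u₂ u₃ η₁ η₂ η₃ lam₁ lam₂ lam₃ : ℝ × ℝ → ℝ)
    (hu₁ : ContDiff ℝ 1 u₁) (hu₂ : ContDiff ℝ 1 u₂) (hu₃ : ContDiff ℝ 1 u₃)
    (hη₁ : ContDiff ℝ 1 η₁) (hη₂ : ContDiff ℝ 1 η₂) (hη₃ : ContDiff ℝ 1 η₃)
    (hlam₁ : ContDiff ℝ 1 lam₁) (hlam₂ : ContDiff ℝ 1 lam₂) (hlam₃ : ContDiff ℝ 1 lam₃)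
    (γ₁ γ₂ γ₃ u₁0 u₂0 u₃0 : ℝ → ℝ)
    (hγ₁ : ContinuousOn γ₁ (Set.Icc 0 1)) (hγ₂ : ContinuousOn γ₂ (Set.Icc 0 1))
    (hγ₃ : ContinuousOn γ₃ (Set.Icc 0 1))
    (hu₁0 : ContinuousOn u₁0 (Set.Icc 0 1)) (hu₂0 : ContinuousOn u₂0 (Set.Icc 0 1))
    (hu₃0 : ContinuousOn u₃0 (Set.Icc 0 1)) :
    HasDerivAt
      (fun μ : ℝ =>
        (∫ t in (0 : ℝ)..T, ∫ x in (0 : ℝ)..1,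
          (deriv (fun s => u₁ (x, s) + μ * η₁ (x, s)) t * lam₁ (x, t)
            - (u₁ (x, t) + μ * η₁ (x, t)) * (1 - (u₁ (x, t) + μ * η₁ (x, t))) * lam₁ (x, t)
            + δ₁ * (u₁ (x, t) + μ * η₁ (x, t)) * (u₃ (x, t) + μ * η₃ (x, t)) * lam₁ (x, t)
            + deriv (fun s => u₂ (x, s) + μ * η₂ (x, s)) t * lam₂ (x, t)
            - ρ₂ * (u₂ (x, t) + μ * η₂ (x, t)) * (1 - (u₂ (x, t) + μ * η₂ (x, t))) * lam₂ (x, t)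
            + D₂ * (1 - (u₁ (x, t) + μ * η₁ (x, t)))
              * deriv (fun y => u₂ (y, t) + μ * η₂ (y, t)) x
              * deriv (fun y => lam₂ (y, t)) x
            + deriv (fun s => u₃ (x, s) + μ * η₃ (x, s)) t * lam₃ (x, t)
            + δ₃ * (u₃ (x, t) + μ * η₃ (x, t)) * lam₃ (x, t)
            - δ₃ * (u₂ (x, t) + μ * η₂ (x, t)) * lam₃ (x, t)
            + deriv (fun y => u₃ (y, t) + μ * η₃ (y, t)) x
              * deriv (fun y => lam₃ (y, t)) x))
        + (∫ x in (0 : ℝ)..1, (u₁ (x, 0) + μ * η₁ (x, 0) - u₁0 x) * γ₁ x)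
        + (∫ x in (0 : ℝ)..1, (u₂ (x, 0) + μ * η₂ (x, 0) - u₂0 x) * γ₂ x)
        + (∫ x in (0 : ℝ)..1, (u₃ (x, 0) + μ * η₃ (x, 0) - u₃0 x) * γ₃ x))
      ((∫ t in (0 : ℝ)..T, ∫ x in (0 : ℝ)..1,
          ((deriv (fun s => η₁ (x, s)) t - η₁ (x, t) * (1 - 2 * u₁ (x, t))
              + δ₁ * η₁ (x, t) * u₃ (x, t) + δ₁ * u₁ (x, t) * η₃ (x, t)) * lam₁ (x, t)
            + (deriv (fun s => η₂ (x, s)) t - ρ₂ * η₂ (x, t) * (1 - 2 * u₂ (x, t))) * lam₂ (x, t)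
            + (- D₂ * η₁ (x, t) * deriv (fun y => u₂ (y, t)) x
                + D₂ * (1 - u₁ (x, t)) * deriv (fun y => η₂ (y, t)) x)
              * deriv (fun y => lam₂ (y, t)) x
            + (deriv (fun s => η₃ (x, s)) t - δ₃ * (η₂ (x, t) - η₃ (x, t))) * lam₃ (x, t)
            + deriv (fun y => η₃ (y, t)) x * deriv (fun y => lam₃ (y, t)) x))
        + (∫ x in (0 : ℝ)..1, η₁ (x, 0) * γ₁ x)
        + (∫ x in (0 : ℝ)..1, η₂ (x, 0) * γ₂ x)
        + (∫ x in (0 : ℝ)..1, η₃ (x, 0) * γ₃ x))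
      0 := by
  have hd {f : ℝ × ℝ → ℝ} (hf : ContDiff ℝ 1 f) : Differentiable ℝ f :=
    hf.differentiable one_ne_zero
  have hI : uIcc (0 : ℝ) 1 = Icc 0 1 := uIcc_of_le zero_le_one
  have hinit {v w : ℝ × ℝ → ℝ} {v₀ g : ℝ → ℝ} (hv : ContDiff ℝ 1 v) (hw : ContDiff ℝ 1 w)
      (hv₀ : ContinuousOn v₀ (Icc 0 1)) (hg : ContinuousOn g (Icc 0 1)) :=
    hasDerivAt_integral_add_mul_sub_mul (v := fun x => v (x, 0)) (w := fun x => w (x, 0))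
      (hv.continuous.comp (by fun_prop)).continuousOn
      (hw.continuous.comp (by fun_prop)).continuousOn
      (hI ▸ hv₀) (hI ▸ hg)
  have hdomain := hasDerivAt_integral_integral_of_quadratic
    (by unfold constraintDensity; fun_prop) (by unfold constraintDensityLinear; fun_prop)
    (by unfold constraintDensityQuadratic; fun_prop)
    (constraintDensity_add_mul δ₁ ρ₂ D₂ δ₃ (lam₁ := lam₁) (lam₂ := lam₂) (lam₃ := lam₃)
      (hd hu₁) (hd hu₂) (hd hu₃) (hd hη₁) (hd hη₂) (hd hη₃)) 0 1 0 T
  -- The goal's integrands are `constraintDensity` and `constraintDensityLinear` at `(x, t)`,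
  -- unfolded, so the sum of the four derivatives closes it up to definitional unfolding.
  exact ((hdomain.add (hinit hu₁ hη₁ hu₁0 hγ₁)).add (hinit hu₂ hη₂ hu₂0 hγ₂)).add
    (hinit hu₃ hη₃ hu₃0 hγ₃)

/-- Gâteaux derivative of the weak constraint pairing `μ ↦ ⟨E(u + μη, δ₁), (λ,γ)⟩`
of the dimensionless Gatenby–Gawlinski model at `μ = 0`. -/
theorem constraint_pairing_gateaux_derivative_in_state
    (δ₁ ρ₂ D₂ δ₃ T : ℝ) (hT : 0 < T)
    (u₁ u₂ u₃ η₁ η₂ η₃ lam₁ lam₂ lam₃ : ℝ × ℝ → ℝ)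
    (hu₁ : ContDiff ℝ 1 u₁) (hu₂ : ContDiff ℝ 1 u₂) (hu₃ : ContDiff ℝ 1 u₃)
    (hη₁ : ContDiff ℝ 1 η₁) (hη₂ : ContDiff ℝ 1 η₂) (hη₃ : ContDiff ℝ 1 η₃)
    (hlam₁ : ContDiff ℝ 1 lam₁) (hlam₂ : ContDiff ℝ 1 lam₂) (hlam₃ : ContDiff ℝ 1 lam₃)
    (γ₁ γ₂ γ₃ u₁0 u₂0 u₃0 : ℝ → ℝ)
    (hγ₁ : ContinuousOn γ₁ (Set.Icc 0 1)) (hγ₂ : ContinuousOn γ₂ (Set.Icc 0 1))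
    (hγ₃ : ContinuousOn γ₃ (Set.Icc 0 1))
    (hu₁0 : ContinuousOn u₁0 (Set.Icc 0 1)) (hu₂0 : ContinuousOn u₂0 (Set.Icc 0 1))
    (hu₃0 : ContinuousOn u₃0 (Set.Icc 0 1)) :
    HasDerivAt
      (fun μ : ℝ =>
        (∫ t in (0 : ℝ)..T, ∫ x in (0 : ℝ)..1,
          (deriv (fun s => u₁ (x, s) + μ * η₁ (x, s)) t * lam₁ (x, t)
            - (u₁ (x, t) + μ * η₁ (x, t)) * (1 - (u₁ (x, t) + μ * η₁ (x, t))) * lam₁ (x, t)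
            + δ₁ * (u₁ (x, t) + μ * η₁ (x, t)) * (u₃ (x, t) + μ * η₃ (x, t)) * lam₁ (x, t)
            + deriv (fun s => u₂ (x, s) + μ * η₂ (x, s)) t * lam₂ (x, t)
            - ρ₂ * (u₂ (x, t) + μ * η₂ (x, t)) * (1 - (u₂ (x, t) + μ * η₂ (x, t))) * lam₂ (x, t)
            + D₂ * (1 - (u₁ (x, t) + μ * η₁ (x, t)))
              * deriv (fun y => u₂ (y, t) + μ * η₂ (y, t)) x
              * deriv (fun y => lam₂ (y, t)) x
            + deriv (fun s => u₃ (x, s) + μ * η₃ (x, s)) t * lam₃ (x, t)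
            + δ₃ * (u₃ (x, t) + μ * η₃ (x, t)) * lam₃ (x, t)
            - δ₃ * (u₂ (x, t) + μ * η₂ (x, t)) * lam₃ (x, t)
            + deriv (fun y => u₃ (y, t) + μ * η₃ (y, t)) x
              * deriv (fun y => lam₃ (y, t)) x))
        + (∫ x in (0 : ℝ)..1, (u₁ (x, 0) + μ * η₁ (x, 0) - u₁0 x) * γ₁ x)
        + (∫ x in (0 : ℝ)..1, (u₂ (x, 0) + μ * η₂ (x, 0) - u₂0 x) * γ₂ x)
        + (∫ x in (0 : ℝ)..1, (u₃ (x, 0) + μ * η₃ (x, 0) - u₃0 x) * γ₃ x))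
      ((∫ t in (0 : ℝ)..T, ∫ x in (0 : ℝ)..1,
          ((deriv (fun s => η₁ (x, s)) t - η₁ (x, t) * (1 - 2 * u₁ (x, t))
              + δ₁ * η₁ (x, t) * u₃ (x, t) + δ₁ * u₁ (x, t) * η₃ (x, t)) * lam₁ (x, t)
            + (deriv (fun s => η₂ (x, s)) t - ρ₂ * η₂ (x, t) * (1 - 2 * u₂ (x, t))) * lam₂ (x, t)
            + (- D₂ * η₁ (x, t) * deriv (fun y => u₂ (y, t)) x
                + D₂ * (1 - u₁ (x, t)) * deriv (fun y => η₂ (y, t)) x)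
              * deriv (fun y => lam₂ (y, t)) x
            + (deriv (fun s => η₃ (x, s)) t - δ₃ * (η₂ (x, t) - η₃ (x, t))) * lam₃ (x, t)
            + deriv (fun y => η₃ (y, t)) x * deriv (fun y => lam₃ (y, t)) x))
        + (∫ x in (0 : ℝ)..1, η₁ (x, 0) * γ₁ x)
        + (∫ x in (0 : ℝ)..1, η₂ (x, 0) * γ₂ x)
        + (∫ x in (0 : ℝ)..1, η₃ (x, 0) * γ₃ x))
      0 :=
  constraint_pairing_gateaux_derivative_in_state_general δ₁ ρ₂ D₂ δ₃ T u₁ u₂ u₃ η₁ η₂ η₃ lam₁ lam₂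
    lam₃ hu₁ hu₂ hu₃ hη₁ hη₂ hη₃ hlam₁ hlam₂ hlam₃ γ₁ γ₂ γ₃ u₁0 u₂0 u₃0 hγ₁ hγ₂ hγ₃ hu₁0 hu₂0 hu₃0
end

section
/- Let δ₁, ρ₂, D₂, δ₃, T ∈ ℝ with T > 0, let u = (u₁,u₂,u₃), η = (η₁,η₂,η₃), λ = (λ₁,λ₂,λ₃) : [0,1] × [0,T] → ℝ³ be continuously differentiable and let û₃ : [0,1] × [0,T] → ℝ be continuous. Assume: (i) ηᵢ(x,0) = 0 for all x and ηᵢ(1,t) = 0 for all t (i = 1,2,3); (ii) λᵢ(x,T) = 0 for all x and λᵢ(1,t) = 0 for all t (i = 1,2,3); (iii) (linearized state equation, weak form) for every continuously differentiable μ = (μ₁,μ₂,μ₃) : [0,1]×[0,T] → ℝ³ with μᵢ(1,t) = 0 for all t, ∫₀ᵀ∫₀¹ [ (∂η₁/∂t − η₁(1−2u₁) + δ₁η₁u₃ + δ₁u₁η₃)μ₁ + (∂η₂/∂t − ρ₂η₂(1−2u₂))μ₂ + (−D₂η₁(∂u₂/∂x) + D₂(1−u₁)(∂η₂/∂x))(∂μ₂/∂x)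 + (∂η₃/∂t − δ₃(η₂−η₃))μ₃ + (∂η₃/∂x)(∂μ₃/∂x) ] dx dt = −∫₀ᵀ∫₀¹ u₁u₃μ₁ dx dt; (iv) (adjoint equation, weak form) for every continuously differentiable ν = (ν₁,ν₂,ν₃) : [0,1]×[0,T] → ℝ³ with νᵢ(1,t) = 0 for all t, 0 = ∫₀ᵀ∫₀¹ [ −(∂λ₁/∂t)ν₁ − ν₁(1−2u₁)λ₁ + δ₁ν₁u₃λ₁ − D₂ν₁(∂u₂/∂x)(∂λ₂/∂x) − (∂λ₂/∂t)ν₂ − ρ₂ν₂(1−2u₂)λ₂ + D₂(1−u₁)(∂λ₂/∂x)(∂ν₂/∂x) − δ₃ν₂λ₃ − (∂λ₃/∂t)ν₃ + δ₃ν₃λ₃ + (∂λ₃/∂x)(∂ν₃/∂x) + δ₁u₁ν₃λ₁ + ν₃(u₃ − û₃) ] dx dt. Then ∫₀ᵀ∫₀¹ η₃(u₃ − û₃) dx dt = ∫₀ᵀ∫₀¹ u₁u₃λ₁ dx dt. -/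
/-!
Test the linearized equation with `λ` and the adjoint equation with `η`. Pointwise, the two
integrands differ exactly by the source term `η₃ (u₃ - û₃)` and the time derivative of the
pairing `η · λ = η₁λ₁ + η₂λ₂ + η₃λ₃`; all spatial terms cancel, so no integration by parts in `x`
is needed. By Fubini and the fundamental theorem of calculus in `t`, the time derivative
integrates to `∫₀¹ (η · λ)(x, T) - (η · λ)(x, 0) dx = 0`, because `λ(·, T) = 0` and `η(·, 0) = 0`.
-/
open MeasureTheory Set

variable {E : Type*} [NormedAddCommGroup E] [NormedSpace ℝ E]

noncomputable def timeDeriv (f : ℝ × ℝ → E) (q : ℝ × ℝ) : E := deriv (fun s => f (q.1, s)) q.2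

noncomputable def spaceDeriv (f : ℝ × ℝ → E) (q : ℝ × ℝ) : E := deriv (fun y => f (y, q.2)) q.1

section PartialDerivatives

variable {f g : ℝ × ℝ → E} {q : ℝ × ℝ}

theorem timeDeriv_eq_fderiv (hf : DifferentiableAt ℝ f q) :
    timeDeriv f q = fderiv ℝ f q (0, 1) :=
  (hf.hasFDerivAt.comp_hasDerivAt q.2 ((hasDerivAt_const _ q.1).prodMk (hasDerivAt_id _))).deriv

theorem spaceDeriv_eq_fderiv (hf : DifferentiableAt ℝ f q) :
    spaceDeriv f q = fderiv ℝ f q (1, 0) :=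
  (hf.hasFDerivAt.comp_hasDerivAt q.1 ((hasDerivAt_id _).prodMk (hasDerivAt_const _ q.2))).deriv

theorem DifferentiableAt.hasDerivAt_timeDeriv (hf : DifferentiableAt ℝ f q) :
    HasDerivAt (fun s => f (q.1, s)) (timeDeriv f q) q.2 :=
  (hf.comp q.2 ((differentiableAt_const q.1).prodMk differentiableAt_id)).hasDerivAt

@[fun_prop]
theorem ContDiff.continuous_timeDeriv (hf : ContDiff ℝ 1 f) : Continuous (timeDeriv f) := by
  have hdiff := hf.differentiable one_ne_zero
  simp_rw [funext fun q => timeDeriv_eq_fderiv (hdiff q)]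
  exact (hf.continuous_fderiv one_ne_zero).clm_apply continuous_const

@[fun_prop]
theorem ContDiff.continuous_spaceDeriv (hf : ContDiff ℝ 1 f) : Continuous (spaceDeriv f) := by
  have hdiff := hf.differentiable one_ne_zero
  simp_rw [funext fun q => spaceDeriv_eq_fderiv (hdiff q)]
  exact (hf.continuous_fderiv one_ne_zero).clm_apply continuous_const

theorem timeDeriv_add (hf : Differentiable ℝ f) (hg : Differentiable ℝ g) :
    timeDeriv (f + g) = timeDeriv f + timeDeriv g :=
  funext fun q => ((hf q).hasDerivAt_timeDeriv.add (hg q).hasDerivAt_timeDeriv).deriv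

theorem timeDeriv_mul {f g : ℝ × ℝ → ℝ} (hf : Differentiable ℝ f) (hg : Differentiable ℝ g) :
    timeDeriv (f * g) = timeDeriv f * g + f * timeDeriv g :=
  funext fun q => ((hf q).hasDerivAt_timeDeriv.mul (hg q).hasDerivAt_timeDeriv).deriv

end PartialDerivatives

section RectangleIntegrals

variable {a b c d : ℝ}

theorem intervalIntegral_intervalIntegral_eq_setIntegral {f : ℝ × ℝ → E} (hab : a ≤ b)
    (hcd : c ≤ d) (hf : IntegrableOn f (Icc a b ×ˢ Icc c d)) :
    ∫ y in c..d, ∫ x in a..b, f (x, y) = ∫ q in Icc a b ×ˢ Icc c d, f q := by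
  rw [Measure.volume_eq_prod] at hf ⊢
  rw [← setIntegral_prod_swap, setIntegral_prod (fun z => f z.swap) hf.swap,
    intervalIntegral.integral_of_le hcd, ← integral_Icc_eq_integral_Ioc]
  refine setIntegral_congr_fun measurableSet_Icc fun y _ => ?_
  rw [intervalIntegral.integral_of_le hab, ← integral_Icc_eq_integral_Ioc]
  rfl

theorem intervalIntegral_intervalIntegral_add_sub {f g h : ℝ × ℝ → E} (hab : a ≤ b) (hcd : c ≤ d)
    (hf : ContinuousOn f (Icc a b ×ˢ Icc c d)) (hg : ContinuousOn g (Icc a b ×ˢ Icc c d))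
    (hh : ContinuousOn h (Icc a b ×ˢ Icc c d)) :
    ∫ y in c..d, ∫ x in a..b, (f + g - h) (x, y)
      = (∫ y in c..d, ∫ x in a..b, f (x, y)) + (∫ y in c..d, ∫ x in a..b, g (x, y))
        - ∫ y in c..d, ∫ x in a..b, h (x, y) := by
  have hR : IsCompact (Icc a b ×ˢ Icc c d) := isCompact_Icc.prod isCompact_Icc
  have hfi := hf.integrableOn_compact (μ := volume) hR
  have hgi := hg.integrableOn_compact (μ := volume) hR
  have hhi := hh.integrableOn_compact (μ := volume) hR
  rw [intervalIntegral_intervalIntegral_eq_setIntegral hab hcd ((hfi.add hgi).sub hhi),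
    intervalIntegral_intervalIntegral_eq_setIntegral hab hcd hfi,
    intervalIntegral_intervalIntegral_eq_setIntegral hab hcd hgi,
    intervalIntegral_intervalIntegral_eq_setIntegral hab hcd hhi]
  exact (integral_sub (hfi.add hgi) hhi).trans (congrArg (· - _) (integral_add hfi hgi))

theorem integral_integral_timeDeriv_eq_zero [CompleteSpace E] {g : ℝ × ℝ → E} (hab : a ≤ b)
    (hg : ContDiff ℝ 1 g) (hc : ∀ x ∈ Icc a b, g (x, c) = 0) (hd : ∀ x ∈ Icc a b, g (x, d) = 0) :
    ∫ y in c..d, ∫ x in a..b, timeDeriv g (x, y) = 0 := by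
  have hcont := hg.continuous_timeDeriv
  rw [← intervalIntegral_intervalIntegral_swap]
  · have hdiff := hg.differentiable one_ne_zero
    refine (intervalIntegral.integral_congr fun x hx => ?_).trans intervalIntegral.integral_zero
    rw [uIcc_of_le hab] at hx
    rw [intervalIntegral.integral_eq_sub_of_hasDerivAt (f := fun y => g (x, y))
      (fun y _ => (hdiff (x, y)).hasDerivAt_timeDeriv)
      ((hcont.comp (Continuous.prodMk_right x)).intervalIntegrable c d), hd x hx, hc x hx, sub_self]
  · exact (hcont.continuousOn.integrableOn_compact (isCompact_uIcc.prod isCompact_uIcc)).mono_set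
      (prod_mono uIoc_subset_uIcc uIoc_subset_uIcc)

end RectangleIntegrals

section GatenbyGawlinski

variable (δ₁ ρ₂ D₂ δ₃ : ℝ) (u₁ u₂ u₃ : ℝ × ℝ → ℝ)

noncomputable def linearizedIntegrand (η₁ η₂ η₃ μ₁ μ₂ μ₃ : ℝ × ℝ → ℝ) (q : ℝ × ℝ) : ℝ :=
  (timeDeriv η₁ q - η₁ q * (1 - 2 * u₁ q) + δ₁ * η₁ q * u₃ q + δ₁ * u₁ q * η₃ q) * μ₁ q
    + (timeDeriv η₂ q - ρ₂ * η₂ q * (1 - 2 * u₂ q)) * μ₂ q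
    + (- D₂ * η₁ q * spaceDeriv u₂ q + D₂ * (1 - u₁ q) * spaceDeriv η₂ q) * spaceDeriv μ₂ q
    + (timeDeriv η₃ q - δ₃ * (η₂ q - η₃ q)) * μ₃ q
    + spaceDeriv η₃ q * spaceDeriv μ₃ q

noncomputable def adjointIntegrand (u₃hat lam₁ lam₂ lam₃ ν₁ ν₂ ν₃ : ℝ × ℝ → ℝ) (q : ℝ × ℝ) : ℝ :=
  - timeDeriv lam₁ q * ν₁ q
    - ν₁ q * (1 - 2 * u₁ q) * lam₁ q
    + δ₁ * ν₁ q * u₃ q * lam₁ q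
    - D₂ * ν₁ q * spaceDeriv u₂ q * spaceDeriv lam₂ q
    - timeDeriv lam₂ q * ν₂ q
    - ρ₂ * ν₂ q * (1 - 2 * u₂ q) * lam₂ q
    + D₂ * (1 - u₁ q) * spaceDeriv lam₂ q * spaceDeriv ν₂ q
    - δ₃ * ν₂ q * lam₃ q
    - timeDeriv lam₃ q * ν₃ q
    + δ₃ * ν₃ q * lam₃ q
    + spaceDeriv lam₃ q * spaceDeriv ν₃ q
    + δ₁ * u₁ q * ν₃ q * lam₁ q
    + ν₃ q * (u₃ q - u₃hat q)

variable {δ₁ ρ₂ D₂ δ₃ : ℝ} {u₁ u₂ u₃ : ℝ × ℝ → ℝ}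

theorem continuous_linearizedIntegrand {η₁ η₂ η₃ μ₁ μ₂ μ₃ : ℝ × ℝ → ℝ} (hu₁ : Continuous u₁)
    (hu₂ : ContDiff ℝ 1 u₂) (hu₃ : Continuous u₃) (hη₁ : ContDiff ℝ 1 η₁)
    (hη₂ : ContDiff ℝ 1 η₂) (hη₃ : ContDiff ℝ 1 η₃) (hμ₁ : Continuous μ₁)
    (hμ₂ : ContDiff ℝ 1 μ₂) (hμ₃ : ContDiff ℝ 1 μ₃) :
    Continuous (linearizedIntegrand δ₁ ρ₂ D₂ δ₃ u₁ u₂ u₃ η₁ η₂ η₃ μ₁ μ₂ μ₃) := by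
  unfold linearizedIntegrand
  fun_prop

theorem adjointIntegrand_eq_add_sub_timeDeriv
    {u₃hat η₁ η₂ η₃ lam₁ lam₂ lam₃ : ℝ × ℝ → ℝ} (hη₁ : Differentiable ℝ η₁)
    (hη₂ : Differentiable ℝ η₂) (hη₃ : Differentiable ℝ η₃)
    (hlam₁ : Differentiable ℝ lam₁) (hlam₂ : Differentiable ℝ lam₂)
    (hlam₃ : Differentiable ℝ lam₃) :
    adjointIntegrand δ₁ ρ₂ D₂ δ₃ u₁ u₂ u₃ u₃hat lam₁ lam₂ lam₃ η₁ η₂ η₃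
      = η₃ * (u₃ - u₃hat) + linearizedIntegrand δ₁ ρ₂ D₂ δ₃ u₁ u₂ u₃ η₁ η₂ η₃ lam₁ lam₂ lam₃
        - timeDeriv (η₁ * lam₁ + η₂ * lam₂ + η₃ * lam₃) := by
  rw [timeDeriv_add ((hη₁.mul hlam₁).add (hη₂.mul hlam₂)) (hη₃.mul hlam₃),
    timeDeriv_add (hη₁.mul hlam₁) (hη₂.mul hlam₂), timeDeriv_mul hη₁ hlam₁,
    timeDeriv_mul hη₂ hlam₂, timeDeriv_mul hη₃ hlam₃]
  funext q
  simp only [adjointIntegrand, linearizedIntegrand, Pi.add_apply, Pi.sub_apply, Pi.mul_apply]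
  ring

end GatenbyGawlinski

/-- Adjoint-method gradient formula for the Gatenby–Gawlinski tumor invasion
model: if `η` solves the weak linearized state equation (with right-hand side
given by the `δ₁`-derivative of the constraint and zero initial data) and `λ`
solves the weak adjoint problem with source `u₃ − û₃` and `λ(·,T) = 0`, then
`∫₀ᵀ∫₀¹ η₃(u₃ − û₃) dx dt = ∫₀ᵀ∫₀¹ u₁u₃λ₁ dx dt`. -/
theorem adjoint_gradient_formula
    (δ₁ ρ₂ D₂ δ₃ T : ℝ) (hT : 0 < T)
    (u₁ u₂ u₃ η₁ η₂ η₃ lam₁ lam₂ lam₃ : ℝ × ℝ → ℝ)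
    (hu₁ : ContDiff ℝ 1 u₁) (hu₂ : ContDiff ℝ 1 u₂) (hu₃ : ContDiff ℝ 1 u₃)
    (hη₁ : ContDiff ℝ 1 η₁) (hη₂ : ContDiff ℝ 1 η₂) (hη₃ : ContDiff ℝ 1 η₃)
    (hlam₁ : ContDiff ℝ 1 lam₁) (hlam₂ : ContDiff ℝ 1 lam₂) (hlam₃ : ContDiff ℝ 1 lam₃)
    (u₃hat : ℝ × ℝ → ℝ)
    (hu₃hat : ContinuousOn u₃hat (Set.Icc 0 1 ×ˢ Set.Icc 0 T))
    -- (i) zero initial data and boundary condition at x = 1 for η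
    (hη0 : ∀ x ∈ Set.Icc (0 : ℝ) 1, η₁ (x, 0) = 0 ∧ η₂ (x, 0) = 0 ∧ η₃ (x, 0) = 0)
    (hη1 : ∀ t ∈ Set.Icc (0 : ℝ) T, η₁ (1, t) = 0 ∧ η₂ (1, t) = 0 ∧ η₃ (1, t) = 0)
    -- (ii) final-time condition and boundary condition at x = 1 for λ
    (hlamT : ∀ x ∈ Set.Icc (0 : ℝ) 1, lam₁ (x, T) = 0 ∧ lam₂ (x, T) = 0 ∧ lam₃ (x, T) = 0)
    (hlam1 : ∀ t ∈ Set.Icc (0 : ℝ) T, lam₁ (1, t) = 0 ∧ lam₂ (1, t) = 0 ∧ lam₃ (1, t) = 0)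
    -- (iii) linearized state equation in weak form
    (hlin : ∀ μ₁ μ₂ μ₃ : ℝ × ℝ → ℝ,
      ContDiff ℝ 1 μ₁ → ContDiff ℝ 1 μ₂ → ContDiff ℝ 1 μ₃ →
      (∀ t ∈ Set.Icc (0 : ℝ) T, μ₁ (1, t) = 0 ∧ μ₂ (1, t) = 0 ∧ μ₃ (1, t) = 0) →
      ∫ t in (0 : ℝ)..T, ∫ x in (0 : ℝ)..1,
        ((deriv (fun s => η₁ (x, s)) t - η₁ (x, t) * (1 - 2 * u₁ (x, t))
            + δ₁ * η₁ (x, t) * u₃ (x, t) + δ₁ * u₁ (x, t) * η₃ (x, t)) * μ₁ (x, t)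
          + (deriv (fun s => η₂ (x, s)) t - ρ₂ * η₂ (x, t) * (1 - 2 * u₂ (x, t))) * μ₂ (x, t)
          + (- D₂ * η₁ (x, t) * deriv (fun y => u₂ (y, t)) x
              + D₂ * (1 - u₁ (x, t)) * deriv (fun y => η₂ (y, t)) x)
            * deriv (fun y => μ₂ (y, t)) x
          + (deriv (fun s => η₃ (x, s)) t - δ₃ * (η₂ (x, t) - η₃ (x, t))) * μ₃ (x, t)
          + deriv (fun y => η₃ (y, t)) x * deriv (fun y => μ₃ (y, t)) x)
      = - ∫ t in (0 : ℝ)..T, ∫ x in (0 : ℝ)..1, u₁ (x, t) * u₃ (x, t) * μ₁ (x, t))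
    -- (iv) adjoint equation in weak form
    (hadj : ∀ ν₁ ν₂ ν₃ : ℝ × ℝ → ℝ,
      ContDiff ℝ 1 ν₁ → ContDiff ℝ 1 ν₂ → ContDiff ℝ 1 ν₃ →
      (∀ t ∈ Set.Icc (0 : ℝ) T, ν₁ (1, t) = 0 ∧ ν₂ (1, t) = 0 ∧ ν₃ (1, t) = 0) →
      0 = ∫ t in (0 : ℝ)..T, ∫ x in (0 : ℝ)..1,
        (- deriv (fun s => lam₁ (x, s)) t * ν₁ (x, t)
          - ν₁ (x, t) * (1 - 2 * u₁ (x, t)) * lam₁ (x, t)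
          + δ₁ * ν₁ (x, t) * u₃ (x, t) * lam₁ (x, t)
          - D₂ * ν₁ (x, t) * deriv (fun y => u₂ (y, t)) x * deriv (fun y => lam₂ (y, t)) x
          - deriv (fun s => lam₂ (x, s)) t * ν₂ (x, t)
          - ρ₂ * ν₂ (x, t) * (1 - 2 * u₂ (x, t)) * lam₂ (x, t)
          + D₂ * (1 - u₁ (x, t)) * deriv (fun y => lam₂ (y, t)) x
            * deriv (fun y => ν₂ (y, t)) x
          - δ₃ * ν₂ (x, t) * lam₃ (x, t)
          - deriv (fun s => lam₃ (x, s)) t * ν₃ (x, t)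
          + δ₃ * ν₃ (x, t) * lam₃ (x, t)
          + deriv (fun y => lam₃ (y, t)) x * deriv (fun y => ν₃ (y, t)) x
          + δ₁ * u₁ (x, t) * ν₃ (x, t) * lam₁ (x, t)
          + ν₃ (x, t) * (u₃ (x, t) - u₃hat (x, t)))) :
    ∫ t in (0 : ℝ)..T, ∫ x in (0 : ℝ)..1, η₃ (x, t) * (u₃ (x, t) - u₃hat (x, t))
      = ∫ t in (0 : ℝ)..T, ∫ x in (0 : ℝ)..1, u₁ (x, t) * u₃ (x, t) * lam₁ (x, t) := by
  have hlin_lam : ∫ t in (0 : ℝ)..T, ∫ x in (0 : ℝ)..1,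
      linearizedIntegrand δ₁ ρ₂ D₂ δ₃ u₁ u₂ u₃ η₁ η₂ η₃ lam₁ lam₂ lam₃ (x, t) = _ :=
    hlin lam₁ lam₂ lam₃ hlam₁ hlam₂ hlam₃ hlam1
  have hadj_η : 0 = ∫ t in (0 : ℝ)..T, ∫ x in (0 : ℝ)..1,
      adjointIntegrand δ₁ ρ₂ D₂ δ₃ u₁ u₂ u₃ u₃hat lam₁ lam₂ lam₃ η₁ η₂ η₃ (x, t) :=
    hadj η₁ η₂ η₃ hη₁ hη₂ hη₃ hη1
  have hpair_smooth : ContDiff ℝ 1 (η₁ * lam₁ + η₂ * lam₂ + η₃ * lam₃) :=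
    ((hη₁.mul hlam₁).add (hη₂.mul hlam₂)).add (hη₃.mul hlam₃)
  have hpair_integral := integral_integral_timeDeriv_eq_zero (c := 0) (d := T) zero_le_one
    hpair_smooth (fun x hx => by simp [hη0 x hx]) (fun x hx => by simp [hlamT x hx])
  have hdiff {f : ℝ × ℝ → ℝ} (hf : ContDiff ℝ 1 f) : Differentiable ℝ f :=
    hf.differentiable one_ne_zero
  rw [adjointIntegrand_eq_add_sub_timeDeriv (hdiff hη₁) (hdiff hη₂) (hdiff hη₃)
      (hdiff hlam₁) (hdiff hlam₂) (hdiff hlam₃),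
    intervalIntegral_intervalIntegral_add_sub zero_le_one hT.le
      (hη₃.continuous.continuousOn.mul (hu₃.continuous.continuousOn.sub hu₃hat))
      (continuous_linearizedIntegrand hu₁.continuous hu₂ hu₃.continuous hη₁ hη₂ hη₃
        hlam₁.continuous hlam₂ hlam₃).continuousOn
      hpair_smooth.continuous_timeDeriv.continuousOn,
    hlin_lam, hpair_integral] at hadj_η
  simp only [Pi.mul_apply, Pi.sub_apply] at hadj_η
  linarith
end
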